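/- Every minimum decomposition tree corresponds to a unique permutation: the map from permutations of {1,...,n} (extended by n+1) to minimum decomposition trees is injective. -/

import Mathlib

/-- A rooted tree with natural-number labels. -/
inductive RTree : Type
  | node : ℕ → List RTree → RTree
deriving Repr

namespace RTree

/-- Number of leaves of a rooted tree (a node with no children is a leaf). -/
def leafCount : RTree → ℕ
  | .node _ cs =>
    if cs.isEmpty then 1 else (cs.attach.map fun c => leafCount c.1).sum
decreasing_by
  have := List.sizeOf_lt_of_mem c.2
  simp only [RTree.node.sizeOf_spec]
  omega

/-- The list of labels of the leaves of a rooted tree. -/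
def leafVals : RTree → List ℕ
  | .node v cs =>
    if cs.isEmpty then [v] else (cs.attach.map fun c => leafVals c.1).flatten
decreasing_by
  have := List.sizeOf_lt_of_mem c.2
  simp only [RTree.node.sizeOf_spec]
  omega

/-- The sum, over all internal (non-leaf) nodes `v`, of the number of leaves in the
subtree of `v`. -/
def incidenceSum : RTree → ℕ
  | .node v cs =>
    if cs.isEmpty then 0
    else leafCount (.node v cs) + (cs.attach.map fun c => incidenceSum c.1).sum
decreasing_by
  have := List.sizeOf_lt_of_mem c.2
  simp only [RTree.node.sizeOf_spec]
  omega

end RTree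

/-- Split a word into blocks by repeatedly cutting just after the (first occurrence of
the) global maximum of the remaining word, as in the maximum-weight tree construction. -/
def maxSplit : ℕ → List ℕ → List (List ℕ)
  | 0, _ => []
  | _, [] => []
  | fuel + 1, l =>
    let i := l.idxOf (l.foldr max 0)
    l.take (i + 1) :: maxSplit fuel (l.drop (i + 1))

/-- Build the minimum decomposition tree of a word: the root is the minimum `m`; the
word splits as `π₁ ⋯ π_L · m · π_R`, where the `πᵢ` are the blocks of the left part
cut at successive global maxima; the children of `m` are the trees of the `πᵢ` and of
`π_R`. -/
def minDecomp : ℕ → List ℕ → RTree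
  | 0, _ => .node 0 []
  | fuel + 1, l =>
    let m := l.foldr min (l.headD 0)
    let i := l.idxOf m
    let left := l.take i
    let right := l.drop (i + 1)
    .node m
      (((maxSplit left.length left).map (minDecomp fuel))
        ++ (if right.isEmpty then [] else [minDecomp fuel right]))

/-- The word of a permutation `σ ∈ Sₙ` (values in `{1,…,n}`) with `n+1` appended. -/
def permWord {n : ℕ} (σ : Equiv.Perm (Fin n)) : List ℕ :=
  (List.ofFn fun i => (σ i : ℕ) + 1) ++ [n + 1]

/-- The minimum decomposition tree of a permutation. -/
def permTree {n : ℕ} (σ : Equiv.Perm (Fin n)) : RTree :=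
  minDecomp (permWord σ).length (permWord σ)

/-- The weight of a permutation `σ ∈ Sₙ` (Corollary 3.3): the sum over the non-descent
nodes of the number of descents (leaves) in their subtree of its maximum-weight maxmin
tree, minus `n`. -/
def permWeight {n : ℕ} (σ : Equiv.Perm (Fin n)) : ℕ :=
  RTree.incidenceSum (permTree σ) - n

/-- The number of descents of a permutation. -/
def numDescents {n : ℕ} (σ : Equiv.Perm (Fin n)) : ℕ :=
  (Finset.univ.filter fun i : Fin n =>
    ∃ h : (i : ℕ) + 1 < n, σ ⟨(i : ℕ) + 1, h⟩ < σ i).card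

/-! The minimum decomposition tree of a word `w` ending in a strict maximum can be read back:
its root `m` is the minimum, and `w` is the concatenation of the words of the children with
`m` inserted before the last one. That last child is the tree of the right part `π_R`, which is
nonempty because the minimum is not the final letter, and `π_R` again ends in the strict maximum
`w` ends in; each block `πᵢ` is cut just after the first occurrence of its maximum, so it too
ends in a strict maximum, and induction applies. The word `σ(1) ⋯ σ(n) (n+1)` of a permutation
ends in its strict maximum `n + 1`. -/

namespace List

theorem foldr_max_mem_cons {α : Type*} [LinearOrder α] (a : α) (l : List α) :
    l.foldr max a ∈ a :: l := by
  induction l with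
  | nil => simp
  | cons b l ih =>
    rcases max_choice b (l.foldr max a) with h | h <;> simp only [foldr_cons, h] <;> grind

theorem foldr_min_mem_cons {α : Type*} [LinearOrder α] (a : α) (l : List α) :
    l.foldr min a ∈ a :: l := by
  induction l with
  | nil => simp
  | cons b l ih =>
    rcases min_choice b (l.foldr min a) with h | h <;> simp only [foldr_cons, h] <;> grind

theorem foldr_min_headD_mem {α : Type*} [LinearOrder α] {l : List α} (d : α) (hl : l ≠ []) :
    l.foldr min (l.headD d) ∈ l := by
  obtain ⟨a, l, rfl⟩ := exists_cons_of_ne_nil hl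
  simpa using foldr_min_mem_cons a (a :: l)

theorem foldr_max_zero_mem {l : List ℕ} (hl : l ≠ []) : l.foldr max 0 ∈ l := by
  rcases mem_cons.mp (foldr_max_mem_cons 0 l) with h | h
  · obtain ⟨a, ha⟩ := exists_mem_of_ne_nil l hl
    have ha0 : a ≤ 0 := h ▸ le_max_of_le' 0 ha le_rfl
    rwa [h, ← Nat.le_zero.mp ha0]
  · exact h

end List

def EndsWithStrictMax (w : List ℕ) : Prop :=
  ∃ u t, w = u ++ [t] ∧ ∀ x ∈ u, x < t

theorem foldr_min_headD_mem_of_forall_lt {u : List ℕ} {t : ℕ} (hne : u ≠ [])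
    (hu : ∀ x ∈ u, x < t) : (u ++ [t]).foldr min ((u ++ [t]).headD 0) ∈ u := by
  obtain ⟨x, hx⟩ := List.exists_mem_of_ne_nil u hne
  have hmt : (u ++ [t]).foldr min ((u ++ [t]).headD 0) < t :=
    (List.min_le_of_le' _ (by simp [hx]) le_rfl).trans_lt (hu x hx)
  exact (List.mem_append.mp (List.foldr_min_headD_mem 0 (by simp))).resolve_right
    fun h => hmt.ne (List.mem_singleton.mp h)

theorem endsWithStrictMax_take_idxOf_foldr_max {l : List ℕ} (hl : l ≠ []) :
    EndsWithStrictMax (l.take (l.idxOf (l.foldr max 0) + 1)) := by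
  set M := l.foldr max 0
  have hM : M ∈ l := List.foldr_max_zero_mem hl
  refine ⟨l.take (l.idxOf M), M, ?_, fun x hx => ?_⟩
  · rw [List.take_add_one, List.getElem?_idxOf hM]
    rfl
  · have hxl := List.mem_of_mem_take hx
    refine lt_of_le_of_ne (List.le_max_of_le' 0 hxl le_rfl) ?_
    rintro rfl
    exact lt_irrefl _ ((List.mem_take_iff_idxOf_lt hxl).mp hx)

theorem flatten_maxSplit {fuel : ℕ} {l : List ℕ} (h : l.length ≤ fuel) :
    (maxSplit fuel l).flatten = l := by
  induction fuel generalizing l with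
  | zero => simp_all [maxSplit]
  | succ fuel ih =>
    rcases l with _ | ⟨a, l⟩
    · simp [maxSplit]
    · rw [maxSplit.eq_3 _ _ (List.cons_ne_nil a l), List.flatten_cons,
        ih (by simp at h ⊢; omega), List.take_append_drop]

theorem sublist_and_endsWithStrictMax_of_mem_maxSplit {fuel : ℕ} {l b : List ℕ}
    (hb : b ∈ maxSplit fuel l) : b.Sublist l ∧ EndsWithStrictMax b := by
  induction fuel generalizing l with
  | zero => simp [maxSplit] at hb
  | succ fuel ih =>
    rcases l with _ | ⟨a, l⟩
    · simp [maxSplit] at hb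
    · rw [maxSplit.eq_3 _ _ (List.cons_ne_nil a l), List.mem_cons] at hb
      rcases hb with rfl | hb
      · exact ⟨List.take_sublist _ _,
          endsWithStrictMax_take_idxOf_foldr_max (List.cons_ne_nil a l)⟩
      · exact (ih hb).imp_left (·.trans (List.drop_sublist _ _))

namespace RTree

mutual
def readWord : RTree → List ℕ
  | .node v cs => readWordChildren v cs
def readWordChildren (v : ℕ) : List RTree → List ℕ
  | [] => [v]
  | [c] => v :: readWord c
  | c :: cs => readWord c ++ readWordChildren v cs
end

theorem readWord_node_append_singleton (v : ℕ) (cs : List RTree) (c : RTree) :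
    readWord (.node v (cs ++ [c])) = (cs.map readWord).flatten ++ v :: readWord c := by
  rw [readWord]
  induction cs with
  | nil => simp [readWordChildren]
  | cons d cs ih =>
    rcases cs with _ | ⟨e, cs⟩
    · simp [readWordChildren]
    · simp_all [readWordChildren]

end RTree

theorem minDecomp_succ_append_cons {fuel m : ℕ} {u v : List ℕ} (hv : v ≠ [])
    (hmin : (u ++ m :: v).foldr min ((u ++ m :: v).headD 0) = m)
    (hidx : (u ++ m :: v).idxOf m = u.length) :
    minDecomp (fuel + 1) (u ++ m :: v) =
      .node m ((maxSplit u.length u).map (minDecomp fuel) ++ [minDecomp fuel v]) := by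
  rw [minDecomp.eq_2, hmin, hidx]
  simp [hv]

theorem readWord_minDecomp {fuel : ℕ} {w : List ℕ} (hlen : w.length ≤ fuel)
    (hw : EndsWithStrictMax w) : (minDecomp fuel w).readWord = w := by
  induction fuel generalizing w with
  | zero =>
    obtain ⟨u, t, rfl, -⟩ := hw
    simp at hlen
  | succ fuel ih =>
    obtain ⟨u, t, rfl, hu⟩ := hw
    rcases eq_or_ne u [] with rfl | hne
    · simp [minDecomp, maxSplit, RTree.readWord, RTree.readWordChildren]
    set m := (u ++ [t]).foldr min ((u ++ [t]).headD 0) with hm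
    have hm_mem : m ∈ u := foldr_min_headD_mem_of_forall_lt hne hu
    set i := u.idxOf m
    have hi : i < u.length := List.idxOf_lt_length_iff.mpr hm_mem
    have hsplit : u ++ [t] = u.take i ++ m :: (u.drop (i + 1) ++ [t]) := by
      rw [← List.cons_append, ← List.append_assoc, ← List.getElem_idxOf hi,
        ← List.drop_eq_getElem_cons hi, List.take_append_drop]
    have hidx : (u ++ [t]).idxOf m = (u.take i).length := by
      rw [List.idxOf_append_of_mem hm_mem, List.length_take_of_le hi.le]
    rw [hsplit, minDecomp_succ_append_cons (by simp) (hsplit ▸ hm.symm) (hsplit ▸ hidx)]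
    have hblocks : ∀ b ∈ maxSplit (u.take i).length (u.take i),
        (minDecomp fuel b).readWord = b := by
      intro b hb
      obtain ⟨hsub, hb⟩ := sublist_and_endsWithStrictMax_of_mem_maxSplit hb
      have hb_len := hsub.length_le
      simp only [List.length_take, List.length_append, List.length_singleton] at hb_len hlen
      exact ih (by omega) hb
    have hright : (minDecomp fuel (u.drop (i + 1) ++ [t])).readWord = u.drop (i + 1) ++ [t] :=
      ih (by simp at hlen ⊢; omega) ⟨_, t, rfl, fun x hx => hu x (List.mem_of_mem_drop hx)⟩
    rw [RTree.readWord_node_append_singleton, List.map_map,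
      List.map_congr_left (f := RTree.readWord ∘ minDecomp fuel) (g := id) hblocks, List.map_id,
      flatten_maxSplit le_rfl, hright]

theorem permWord_endsWithStrictMax {n : ℕ} (σ : Equiv.Perm (Fin n)) :
    EndsWithStrictMax (permWord σ) :=
  ⟨_, n + 1, rfl, by simp [List.mem_ofFn]⟩

theorem permWord_injective (n : ℕ) :
    Function.Injective (permWord : Equiv.Perm (Fin n) → List ℕ) := by
  intro σ τ h
  have h := List.ofFn_injective (List.append_cancel_right h)
  ext i
  simpa using congrFun h i

theorem readWord_permTree {n : ℕ} (σ : Equiv.Perm (Fin n)) :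
    (permTree σ).readWord = permWord σ :=
  readWord_minDecomp le_rfl (permWord_endsWithStrictMax σ)

/-- Every minimum decomposition tree corresponds to a unique permutation (Lemma 3.6):
the map sending a permutation of `{1,…,n}` (extended by `n+1`) to its minimum
decomposition tree is injective. -/
theorem minDecomp_injective (n : ℕ) :
    Function.Injective (fun σ : Equiv.Perm (Fin n) => permTree σ) := by
  intro σ τ h
  apply permWord_injective n
  rw [← readWord_permTree σ, ← readWord_permTree τ]
  exact congrArg RTree.readWord h
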